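/- arXiv:1602.05187 — 3 statements merged into one kernel-verified Lean document; each statement's English description precedes it below -/
import Mathlib

section
/- Let L be an n-dimensional Lie algebra over an algebraically closed field F of characteristic zero with n ≥ 2. Suppose that (i) dim[L, L] ≤ n − 2, and (ii) the intersection Z(L) ∩ [L, L] of the center with the derived subalgebra is nontrivial. Then L admits a 2-local automorphism which is not an automorphism; that is, there exists a 2-local automorphism T : L → L for which no Lie algebra automorphism Φ of L satisfies Φ(x) = T(x) for all x ∈ L. -/
/-- A (not necessarily linear) map `T : L → L` is a 2-local automorphism if for every pair
`x, y` there is a Lie algebra automorphism agreeing with `T` at `x` and `y`. -/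
def Is2LocalAut (F : Type*) {L : Type*} [Field F] [LieRing L] [LieAlgebra F L]
    (T : L → L) : Prop :=
  ∀ x y : L, ∃ Φ : L ≃ₗ⁅F⁆ L, Φ x = T x ∧ Φ y = T y

/-!
The map `T x = x + g (p x) • z` is a 2-local automorphism but not an automorphism, where
`p : L → F²` is a linear surjection vanishing on `[L, L]`, `z ≠ 0` lies in `Z(L) ∩ [L, L]` and
`g (a, b) = a² / b`. For every linear form `ℓ` vanishing on `[L, L]`, `x ↦ x + ℓ x • z` is an
automorphism; `g` is homogeneous of degree one, so on any two vectors it agrees with a linear form,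
which makes `T` 2-local. But `g` is not additive, so `T` is not additive.
-/

section HomogeneousFunction

variable {F V : Type*} [Field F] [AddCommGroup V] [Module F V]

theorem exists_dual_eq_one_of_notMem_span_singleton {x y : V} (h : x ∉ F ∙ y) :
    ∃ f : V →ₗ[F] F, f x = 1 ∧ f y = 0 := by
  obtain ⟨f, hfx, hf⟩ := Submodule.exists_dual_map_eq_bot_of_notMem h inferInstance
  have hfy : f y = 0 := by
    simpa [hf] using Submodule.mem_map_of_mem (f := f) (Submodule.mem_span_singleton_self y)
  exact ⟨(f x)⁻¹ • f, by simp [hfx], by simp [hfy]⟩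

variable {g : V → F}

theorem exists_dual_eq_of_homogeneous (hg : ∀ (t : F) (v : V), g (t • v) = t * g v) (v : V) :
    ∃ f : V →ₗ[F] F, f v = g v := by
  rcases eq_or_ne v 0 with rfl | hv
  · exact ⟨0, by simpa using (hg 0 0).symm⟩
  · have hv' : v ∉ (F ∙ (0 : V)) := by simpa using hv
    obtain ⟨f, hfv, -⟩ := exists_dual_eq_one_of_notMem_span_singleton hv'
    exact ⟨g v • f, by simp [hfv]⟩

theorem exists_dual_eq_pair_of_mem_span_singleton
    (hg : ∀ (t : F) (v : V), g (t • v) = t * g v) {u v : V} (h : u ∈ F ∙ v) :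
    ∃ f : V →ₗ[F] F, f u = g u ∧ f v = g v := by
  obtain ⟨t, rfl⟩ := Submodule.mem_span_singleton.mp h
  obtain ⟨f, hf⟩ := exists_dual_eq_of_homogeneous hg v
  exact ⟨f, by rw [map_smul, hf, hg, smul_eq_mul], hf⟩

theorem exists_dual_eq_pair (hg : ∀ (t : F) (v : V), g (t • v) = t * g v) (u v : V) :
    ∃ f : V →ₗ[F] F, f u = g u ∧ f v = g v := by
  by_cases huv : u ∈ F ∙ v
  · exact exists_dual_eq_pair_of_mem_span_singleton hg huv
  by_cases hvu : v ∈ F ∙ u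
  · obtain ⟨f, hv, hu⟩ := exists_dual_eq_pair_of_mem_span_singleton hg hvu
    exact ⟨f, hu, hv⟩
  obtain ⟨f₁, hf₁u, hf₁v⟩ := exists_dual_eq_one_of_notMem_span_singleton huv
  obtain ⟨f₂, hf₂v, hf₂u⟩ := exists_dual_eq_one_of_notMem_span_singleton hvu
  exact ⟨g u • f₁ + g v • f₂, by simp [hf₁u, hf₂u], by simp [hf₁v, hf₂v]⟩

end HomogeneousFunction

theorem Submodule.exists_surjective_le_ker {K V W : Type*} [Field K] [AddCommGroup V] [Module K V]
    [FiniteDimensional K V] [AddCommGroup W] [Module K W] [FiniteDimensional K W]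
    (U : Submodule K V) (h : Module.finrank K U + Module.finrank K W ≤ Module.finrank K V) :
    ∃ p : V →ₗ[K] W, Function.Surjective p ∧ U ≤ LinearMap.ker p := by
  have hQ : Module.finrank K W ≤ Module.finrank K (V ⧸ U) := by
    have := U.finrank_quotient_add_finrank; omega
  obtain ⟨i, hi⟩ := finrank_le_iff_exists_linearMap.mp hQ
  obtain ⟨q, hqi⟩ := i.exists_leftInverse_of_injective (LinearMap.ker_eq_bot.mpr hi)
  refine ⟨q ∘ₗ U.mkQ, fun w => ?_, fun v hv => ?_⟩
  · obtain ⟨v, hv⟩ := U.mkQ_surjective (i w)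
    exact ⟨v, by simp [hv, ← LinearMap.comp_apply, hqi]⟩
  · simp [(Submodule.Quotient.mk_eq_zero U).mpr hv]

theorem map_add_of_forall_eq_add_smul {R M E : Type*} [CommRing R] [IsCancelMulZero R]
    [AddCommGroup M] [Module R M] [Module.IsTorsionFree R M] [FunLike E M M] [AddHomClass E M M]
    (Φ : E) {h : M → R} {z : M} (hz : z ≠ 0) (hΦ : ∀ x, Φ x = x + h x • z) (x y : M) :
    h (x + y) = h x + h y := by
  have hadd := map_add Φ x y
  rw [hΦ, hΦ, hΦ] at hadd
  have hsmul : (h (x + y) - (h x + h y)) • z = 0 := by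
    rw [sub_smul, add_smul]; linear_combination (norm := module) hadd
  exact sub_eq_zero.mp ((smul_eq_zero.mp hsmul).resolve_right hz)

section SqDiv

variable {F : Type*} [Field F]

/-- On the line `b = 0` this is `0`, by the convention `x / 0 = 0`. -/
def sqDiv (u : F × F) : F := u.1 ^ 2 / u.2

theorem sqDiv_smul (t : F) (u : F × F) : sqDiv (t • u) = t * sqDiv u := by
  rcases eq_or_ne t 0 with rfl | ht
  · simp [sqDiv]
  rcases eq_or_ne u.2 0 with hu | hu
  · simp [sqDiv, hu]
  · simp only [sqDiv, Prod.smul_fst, Prod.smul_snd, smul_eq_mul]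
    field_simp

theorem sqDiv_add_ne : sqDiv ((1, 0) + (0, 1) : F × F) ≠ sqDiv (1, 0) + sqDiv (0, 1) := by
  simp [sqDiv]

end SqDiv

namespace LieAlgebra

variable {R L : Type*} [CommRing R] [LieRing L] [LieAlgebra R L]

theorem lie_mem_derivedSeries_one (x y : L) : ⁅x, y⁆ ∈ derivedSeries R L 1 := by
  simpa [derivedSeries_def, derivedSeriesOfIdeal_succ] using
    LieSubmodule.lie_mem_lie (LieSubmodule.mem_top x) (LieSubmodule.mem_top y)

def shiftByCentral (ℓ : L →ₗ[R] R) (hℓ : ∀ x y : L, ℓ ⁅x, y⁆ = 0) {z : L}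
    (hz : z ∈ center R L) (hℓz : ℓ z = 0) : L ≃ₗ⁅R⁆ L where
  toFun x := x + ℓ x • z
  map_add' x y := by simp only [map_add, add_smul]; abel
  map_smul' r x := by simp [smul_smul, smul_add]
  map_lie' {x y} := by
    have hzc : ∀ x : L, ⁅x, z⁆ = 0 := (LieModule.mem_maxTrivSubmodule R L L z).mp hz
    have hcz : ⁅z, y⁆ = 0 := by rw [← lie_skew, hzc, neg_zero]
    simp [lie_add, add_lie, hzc, hcz, hℓ]
  invFun x := x - ℓ x • z
  left_inv x := by simp [hℓz]
  right_inv x := by simp [hℓz]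

@[simp] theorem shiftByCentral_apply (ℓ : L →ₗ[R] R) (hℓ : ∀ x y : L, ℓ ⁅x, y⁆ = 0) {z : L}
    (hz : z ∈ center R L) (hℓz : ℓ z = 0) (x : L) :
    shiftByCentral ℓ hℓ hz hℓz x = x + ℓ x • z := rfl

end LieAlgebra

theorem is2LocalAut_add_smul {F L V : Type*} [Field F] [LieRing L] [LieAlgebra F L]
    [AddCommGroup V] [Module F V] (p : L →ₗ[F] V) (hp : ∀ x y : L, p ⁅x, y⁆ = 0) {g : V → F}
    (hg : ∀ (t : F) (v : V), g (t • v) = t * g v) {z : L} (hz : z ∈ LieAlgebra.center F L)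
    (hpz : p z = 0) :
    Is2LocalAut F fun x => x + g (p x) • z := by
  intro x y
  obtain ⟨f, hfx, hfy⟩ := exists_dual_eq_pair hg (p x) (p y)
  exact ⟨LieAlgebra.shiftByCentral (f ∘ₗ p) (fun a b => by simp [hp]) hz (by simp [hpz]),
    by simp [hfx], by simp [hfy]⟩

theorem exists_two_local_automorphism_not_automorphism_general
    (F L : Type*) [Field F]
    [LieRing L] [LieAlgebra F L] [FiniteDimensional F L]
    (n : ℕ) (hn : 2 ≤ n) (hdim : Module.finrank F L = n)
    (hder : Module.finrank F (LieAlgebra.derivedSeries F L 1) ≤ n - 2)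
    (hcen : LieAlgebra.center F L ⊓ LieAlgebra.derivedSeries F L 1 ≠ ⊥) :
    ∃ T : L → L, Is2LocalAut F T ∧ ¬ ∃ Φ : L ≃ₗ⁅F⁆ L, ∀ x : L, Φ x = T x := by
  obtain ⟨z, ⟨hzc, hzD⟩, hz0⟩ :
      ∃ z ∈ LieAlgebra.center F L ⊓ LieAlgebra.derivedSeries F L 1, z ≠ 0 := by
    by_contra! h
    exact hcen ((LieSubmodule.eq_bot_iff _).mpr h)
  have hcodim : Module.finrank F (LieAlgebra.derivedSeries F L 1).toSubmodule +
      Module.finrank F (F × F) ≤ Module.finrank F L := by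
    rw [Module.finrank_prod, Module.finrank_self]
    have : Module.finrank F (LieAlgebra.derivedSeries F L 1).toSubmodule ≤ n - 2 := hder
    omega
  obtain ⟨p, hp, hDp⟩ := Submodule.exists_surjective_le_ker _ hcodim
  refine ⟨fun x => x + sqDiv (p x) • z,
    is2LocalAut_add_smul p (fun x y => hDp (LieAlgebra.lie_mem_derivedSeries_one x y))
      sqDiv_smul hzc (hDp hzD), ?_⟩
  rintro ⟨Φ, hΦ⟩
  obtain ⟨x₁, hx₁⟩ := hp (1, 0)
  obtain ⟨x₂, hx₂⟩ := hp (0, 1)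
  have hadd := map_add_of_forall_eq_add_smul Φ hz0 hΦ x₁ x₂
  rw [map_add, hx₁, hx₂] at hadd
  exact sqDiv_add_ne hadd

/-- An `n`-dimensional Lie algebra (`n ≥ 2`) over an algebraically closed field of
characteristic zero with `dim [L, L] ≤ n - 2` and `Z(L) ∩ [L, L] ≠ 0` admits a 2-local
automorphism which is not an automorphism. -/
theorem exists_two_local_automorphism_not_automorphism
    (F L : Type*) [Field F] [IsAlgClosed F] [CharZero F]
    [LieRing L] [LieAlgebra F L] [FiniteDimensional F L]
    (n : ℕ) (hn : 2 ≤ n) (hdim : Module.finrank F L = n)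
    (hder : Module.finrank F (LieAlgebra.derivedSeries F L 1) ≤ n - 2)
    (hcen : LieAlgebra.center F L ⊓ LieAlgebra.derivedSeries F L 1 ≠ ⊥) :
    ∃ T : L → L, Is2LocalAut F T ∧ ¬ ∃ Φ : L ≃ₗ⁅F⁆ L, ∀ x : L, Φ x = T x :=
  exists_two_local_automorphism_not_automorphism_general F L n hn hdim hder hcen
end

section
/- Let L be a finite-dimensional nilpotent Lie algebra over an algebraically closed field F of characteristic zero with dim L ≥ 2. Then L admits a 2-local automorphism which is not an automorphism; that is, there exists a 2-local automorphism T : L → L for which no Lie algebra automorphism Φ of L satisfies Φ(x) = T(x) for all x ∈ L. -/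
open Module Submodule

section LinearAlgebra

variable {K V : Type*} [Field K] [AddCommGroup V] [Module K V]

theorem exists_dual_eq_eq_of_homogeneous {h : V → K}
    (hh : ∀ (t : K) (x : V), h (t • x) = t * h x) (u v : V) :
    ∃ f : Dual K V, f u = h u ∧ f v = h v := by
  have h0 : h 0 = 0 := by simpa using hh 0 0
  let g : V →ₗ.[K] K := LinearPMap.mkSpanSingleton' v (h v) fun c hc => by
    rw [RingHom.id_apply, smul_eq_mul, ← hh, hc, h0]
  have hg : ∀ f : Dual K V, f ∘ₗ g.domain.subtype = g.toFun →
      ∀ c : K, f (c • v) = h (c • v) := by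
    intro f hf c
    have hcv : c • v ∈ g.domain := smul_mem _ c (mem_span_singleton_self v)
    calc f (c • v) = g ⟨c • v, hcv⟩ := LinearMap.congr_fun hf ⟨c • v, hcv⟩
      _ = c * h v := LinearPMap.mkSpanSingleton'_apply v (h v) _ c hcv
      _ = h (c • v) := (hh c v).symm
  by_cases hu : u ∈ K ∙ v
  · obtain ⟨f, hf⟩ := LinearMap.exists_extend g.toFun
    obtain ⟨c, rfl⟩ := mem_span_singleton.mp hu
    exact ⟨f, hg f hf c, by simpa using hg f hf 1⟩
  · obtain ⟨f, hf, hfu⟩ := LinearMap.exists_extend_of_notMem g.toFun hu (h u)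
    exact ⟨f, hfu, by simpa using hg f hf 1⟩

theorem exists_dual_eq_one_notMem_span_singleton (hd : 2 ≤ finrank K V) :
    ∃ (u v : V) (φ : Dual K V), φ u = 1 ∧ v ∉ K ∙ u := by
  have : FiniteDimensional K V := Module.finite_of_finrank_pos (by omega)
  let b := finBasis K V
  let i : Fin (finrank K V) := ⟨0, by omega⟩
  let j : Fin (finrank K V) := ⟨1, by omega⟩
  have hij : i ≠ j := by simp [i, j, Fin.ext_iff]
  refine ⟨b i, b j, b.coord i, by simp, fun hv => ?_⟩
  obtain ⟨c, hc⟩ := mem_span_singleton.mp hv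
  simpa [hij.symm] using congr(b.coord j $hc)

theorem indicator_submodule_smul (p : Submodule K V) (φ : Dual K V) (t : K) (x : V) :
    (p : Set V).indicator φ (t • x) = t * (p : Set V).indicator φ x := by
  rcases eq_or_ne t 0 with rfl | ht
  · simp
  by_cases hx : x ∈ p
  · simp [Set.indicator_of_mem hx, Set.indicator_of_mem (p.smul_mem t hx)]
  · simp [Set.indicator_of_notMem hx, Set.indicator_of_notMem (mt (p.smul_mem_iff ht).mp hx)]

theorem indicator_span_singleton_add_ne {u v : V} {φ : Dual K V} (hφ : φ u = 1)
    (hv : v ∉ K ∙ u) :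
    ((K ∙ u : Submodule K V) : Set V).indicator φ (u + v) ≠
      ((K ∙ u : Submodule K V) : Set V).indicator φ u +
        ((K ∙ u : Submodule K V) : Set V).indicator φ v := by
  have huv : u + v ∉ K ∙ u := fun h => hv (by simpa using sub_mem h (mem_span_singleton_self u))
  simp [Set.indicator_of_notMem huv, Set.indicator_of_notMem hv, hφ]

end LinearAlgebra

section Lie

variable {F L : Type*} [Field F] [LieRing L] [LieAlgebra F L]

noncomputable def LieEquiv.dilatransvection {f : Dual F L} {z : L} (hz : ∀ w : L, ⁅w, z⁆ = 0)
    (hf : ∀ a b : L, f ⁅a, b⁆ = 0) (h : 1 + f z ≠ 0) : L ≃ₗ⁅F⁆ L :=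
  { LinearEquiv.dilatransvection (isUnit_iff_ne_zero.mpr h) with
    map_lie' := by
      intro x y
      have hz' : ∀ w : L, ⁅z, w⁆ = 0 := fun w => by rw [← lie_skew, hz, neg_zero]
      simp [LinearMap.transvection.apply, hf, hz, hz', lie_add, add_lie, lie_smul, smul_lie] }

theorem LieEquiv.dilatransvection_apply {f : Dual F L} {z : L} (hz : ∀ w : L, ⁅w, z⁆ = 0)
    (hf : ∀ a b : L, f ⁅a, b⁆ = 0) (h : 1 + f z ≠ 0) (x : L) :
    LieEquiv.dilatransvection hz hf h x = x + f x • z :=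
  LinearMap.transvection.apply f z x

theorem is2LocalAut_add_smul_s10 {z : L} (hz : ∀ w : L, ⁅w, z⁆ = 0) {g : L → F}
    (hg : ∀ x y : L, ∃ f : Dual F L, (∀ a b : L, f ⁅a, b⁆ = 0) ∧ 1 + f z ≠ 0 ∧
      f x = g x ∧ f y = g y) :
    Is2LocalAut F fun x => x + g x • z := by
  intro x y
  obtain ⟨f, hf, hfz, hfx, hfy⟩ := hg x y
  exact ⟨LieEquiv.dilatransvection hz hf hfz, by simp [LieEquiv.dilatransvection_apply, hfx],
    by simp [LieEquiv.dilatransvection_apply, hfy]⟩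

theorem not_exists_lieEquiv_eq_add_smul {z : L} (hz : z ≠ 0) {g : L → F} {x y : L}
    (hxy : g (x + y) ≠ g x + g y) :
    ¬ ∃ Φ : L ≃ₗ⁅F⁆ L, ∀ w : L, Φ w = w + g w • z := by
  rintro ⟨Φ, hΦ⟩
  have hadd := map_add Φ x y
  rw [hΦ, hΦ, hΦ, add_add_add_comm, add_right_inj, ← add_smul] at hadd
  exact hxy (smul_left_injective F hz hadd)

end Lie

namespace LieModule

variable {R L M : Type*} [CommRing R] [LieRing L] [LieAlgebra R L] [AddCommGroup M] [Module R M]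
  [LieRingModule L M]

theorem lie_mem_lowerCentralSeries_succ (x : L) {m : M} {k : ℕ}
    (hm : m ∈ lowerCentralSeries R L M k) : ⁅x, m⁆ ∈ lowerCentralSeries R L M (k + 1) := by
  rw [lowerCentralSeries_succ]
  exact LieSubmodule.lie_mem_lie (LieSubmodule.mem_top x) hm

variable [LieModule R L M]

theorem isTrivial_of_lowerCentralSeries_one_le_two [IsNilpotent L M]
    (h : lowerCentralSeries R L M 1 ≤ lowerCentralSeries R L M 2) : IsTrivial L M := by
  have hle : ∀ k, lowerCentralSeries R L M 1 ≤ lowerCentralSeries R L M (k + 1) := by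
    intro k
    induction k with
    | zero => exact le_rfl
    | succ k ih =>
      rw [lowerCentralSeries_succ R L M (k + 1)]
      exact h.trans (LieSubmodule.mono_lie_right ⊤ ih)
  obtain ⟨k, hk⟩ := IsNilpotent.nilpotent R L M
  rw [trivial_iff_lower_central_eq_bot R, eq_bot_iff, ← hk]
  exact (hle k).trans (antitone_lowerCentralSeries R L M k.le_succ)

theorem exists_ne_zero_mem_lowerCentralSeries_one_forall_lie_eq_zero [IsNilpotent L M]
    (h : ¬ IsTrivial L M) :
    ∃ m : M, m ≠ 0 ∧ m ∈ lowerCentralSeries R L M 1 ∧ ∀ x : L, ⁅x, m⁆ = 0 := by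
  rw [← disjoint_lowerCentralSeries_maxTrivSubmodule_iff R, ← LieSubmodule.disjoint_toSubmodule,
    Submodule.disjoint_def] at h
  push Not at h
  obtain ⟨m, hm1, hmz, hm0⟩ := h
  exact ⟨m, hm0, hm1, (mem_maxTrivSubmodule R L M m).mp hmz⟩

end LieModule

section Nilpotent

open LieModule

variable {F L : Type*} [Field F] [LieRing L] [LieAlgebra F L]

theorem lowerCentralSeries_one_le_two_of_forall_sub_smul_mem (a : L)
    (ha : ∀ x : L, ∃ c : F, x - c • a ∈ lowerCentralSeries F L L 1) :
    lowerCentralSeries F L L 1 ≤ lowerCentralSeries F L L 2 := by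
  rw [show lowerCentralSeries F L L 1 = ⁅(⊤ : LieIdeal F L), ⊤⁆ from
    lowerCentralSeries_succ F L L 0, LieSubmodule.lie_le_iff]
  intro x _ y _
  obtain ⟨c, hc⟩ := ha x
  obtain ⟨d, hd⟩ := ha y
  have hxy : ⁅x, y⁆ = -⁅y, x - c • a⁆ + c • ⁅a, y - d • a⁆ := by
    simp only [lie_sub, lie_smul, lie_self, smul_zero, sub_zero, ← lie_skew y x]
    rw [← lie_skew a y, smul_neg]
    abel
  rw [hxy]
  exact add_mem (neg_mem (lie_mem_lowerCentralSeries_succ y hc))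
    (Submodule.smul_mem _ c (lie_mem_lowerCentralSeries_succ a hd))

theorem two_le_finrank_quotient_lowerCentralSeries_one [FiniteDimensional F L]
    [LieRing.IsNilpotent L] (h : ¬ IsTrivial L L) :
    2 ≤ finrank F (L ⧸ (lowerCentralSeries F L L 1 : Submodule F L)) := by
  by_contra! hlt
  obtain ⟨v, hv⟩ := finrank_le_one_iff.mp (Nat.le_of_lt_succ hlt)
  obtain ⟨a, rfl⟩ := Submodule.mkQ_surjective _ v
  refine h (isTrivial_of_lowerCentralSeries_one_le_two
    (lowerCentralSeries_one_le_two_of_forall_sub_smul_mem (F := F) a fun x => ?_))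
  obtain ⟨c, hc⟩ := hv (Submodule.mkQ _ x)
  exact ⟨c, (Submodule.Quotient.eq _).mp (hc.symm.trans (map_smul _ c a).symm)⟩

end Nilpotent

section TwoLocal

open LieModule

variable {F L : Type*} [Field F] [LieRing L] [LieAlgebra F L]

theorem exists_is2LocalAut_not_lieEquiv_of_isTrivial [NeZero (2 : F)] [IsTrivial L L]
    (hd : 2 ≤ finrank F L) :
    ∃ T : L → L, Is2LocalAut F T ∧ ¬ ∃ Φ : L ≃ₗ⁅F⁆ L, ∀ x : L, Φ x = T x := by
  obtain ⟨u, v, φ, hφu, hv⟩ := exists_dual_eq_one_notMem_span_singleton hd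
  set g := ((F ∙ u : Submodule F L) : Set L).indicator φ
  have hu0 : u ≠ 0 := by rintro rfl; simp at hφu
  have hgu : g u = 1 := by simp [g, hφu]
  have hline : ∀ f : Dual F L, f u = 1 → ∀ x ∈ F ∙ u, f x = g x := by
    intro f hf x hx
    obtain ⟨c, rfl⟩ := mem_span_singleton.mp hx
    simp [g, Set.indicator_of_mem hx, hf, hφu]
  have hpoint : ∀ y : L, ∃ f : Dual F L, f u = 1 ∧ f y = g y := fun y => by
    obtain ⟨f, hfu, hfy⟩ := exists_dual_eq_eq_of_homogeneous (indicator_submodule_smul _ φ) u y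
    exact ⟨f, hfu.trans hgu, hfy⟩
  have hbr : ∀ (f : Dual F L) (a b : L), f ⁅a, b⁆ = 0 := fun f a b => by
    rw [trivial_lie_zero, map_zero]
  have htwo : (1 : F) + 1 ≠ 0 := one_add_one_eq_two (R := F) ▸ two_ne_zero
  refine ⟨_, is2LocalAut_add_smul_s10 (fun w => trivial_lie_zero L L w u) fun x y => ?_,
    not_exists_lieEquiv_eq_add_smul hu0 (indicator_span_singleton_add_ne hφu hv)⟩
  by_cases hx : x ∈ F ∙ u
  · obtain ⟨f, hfu, hfy⟩ := hpoint y
    exact ⟨f, hbr f, hfu ▸ htwo, hline f hfu x hx, hfy⟩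
  by_cases hy : y ∈ F ∙ u
  · obtain ⟨f, hfu, hfx⟩ := hpoint x
    exact ⟨f, hbr f, hfu ▸ htwo, hfx, hline f hfu y hy⟩
  · exact ⟨0, by simp, by simp, by simp [Set.indicator_of_notMem hx],
      by simp [Set.indicator_of_notMem hy]⟩

theorem exists_is2LocalAut_not_lieEquiv_of_not_isTrivial [FiniteDimensional F L]
    [LieRing.IsNilpotent L] (hL : ¬ IsTrivial L L) :
    ∃ T : L → L, Is2LocalAut F T ∧ ¬ ∃ Φ : L ≃ₗ⁅F⁆ L, ∀ x : L, Φ x = T x := by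
  obtain ⟨z, hz0, hzD, hzc⟩ :=
    exists_ne_zero_mem_lowerCentralSeries_one_forall_lie_eq_zero (R := F) hL
  let D : Submodule F L := lowerCentralSeries F L L 1
  obtain ⟨u, v, φ, hφu, hv⟩ := exists_dual_eq_one_notMem_span_singleton
    (two_le_finrank_quotient_lowerCentralSeries_one (F := F) hL)
  let g := ((F ∙ u : Submodule F (L ⧸ D)) : Set (L ⧸ D)).indicator φ
  obtain ⟨x, hx⟩ := D.mkQ_surjective u
  obtain ⟨y, hy⟩ := D.mkQ_surjective v
  refine ⟨_, is2LocalAut_add_smul_s10 hzc (g := g ∘ D.mkQ) fun a b => ?_,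
    not_exists_lieEquiv_eq_add_smul hz0 (x := x) (y := y) ?_⟩
  · obtain ⟨f, hfa, hfb⟩ :=
      exists_dual_eq_eq_of_homogeneous (indicator_submodule_smul (F ∙ u) φ) (D.mkQ a) (D.mkQ b)
    have hfD : ∀ w ∈ D, (f ∘ₗ D.mkQ) w = 0 := fun w hw => by
      rw [LinearMap.comp_apply, Submodule.mkQ_apply, (Submodule.Quotient.mk_eq_zero D).mpr hw,
        map_zero]
    refine ⟨f ∘ₗ D.mkQ, fun a' b' => hfD _ ?_, by rw [hfD z hzD, add_zero]; exact one_ne_zero,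
      hfa, hfb⟩
    exact lie_mem_lowerCentralSeries_succ a' (LieSubmodule.mem_top b')
  · rw [Function.comp_apply, Function.comp_apply, Function.comp_apply, map_add, hx, hy]
    exact indicator_span_singleton_add_ne hφu hv

end TwoLocal

theorem nilpotent_exists_two_local_automorphism_not_automorphism_general
    (F L : Type*) [Field F] [CharZero F]
    [LieRing L] [LieAlgebra F L] [FiniteDimensional F L]
    [LieRing.IsNilpotent L]
    (hdim : 2 ≤ Module.finrank F L) :
    ∃ T : L → L, Is2LocalAut F T ∧ ¬ ∃ Φ : L ≃ₗ⁅F⁆ L, ∀ x : L, Φ x = T x := by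
  by_cases hL : LieModule.IsTrivial L L
  · exact exists_is2LocalAut_not_lieEquiv_of_isTrivial hdim
  · exact exists_is2LocalAut_not_lieEquiv_of_not_isTrivial hL

/-- Every finite-dimensional nilpotent Lie algebra of dimension at least 2 over an
algebraically closed field of characteristic zero admits a 2-local automorphism which is not
an automorphism. -/
theorem nilpotent_exists_two_local_automorphism_not_automorphism
    (F L : Type*) [Field F] [IsAlgClosed F] [CharZero F]
    [LieRing L] [LieAlgebra F L] [FiniteDimensional F L]
    [LieRing.IsNilpotent L]
    (hdim : 2 ≤ Module.finrank F L) :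
    ∃ T : L → L, Is2LocalAut F T ∧ ¬ ∃ Φ : L ≃ₗ⁅F⁆ L, ∀ x : L, Φ x = T x :=
  nilpotent_exists_two_local_automorphism_not_automorphism_general F L hdim
end

section
/- Let L be a finite-dimensional abelian Lie algebra over an algebraically closed field F of characteristic zero with dim L ≥ 2. Then L admits a 2-local automorphism which is not an automorphism; that is, there exists a 2-local automorphism T : L → L for which no Lie algebra automorphism Φ of L satisfies Φ(x) = T(x) for all x ∈ L. -/
open Module Submodule

namespace LinearEquiv

variable {R L L' : Type*} [CommRing R] [LieRing L] [LieAlgebra R L] [IsLieAbelian L]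
  [LieRing L'] [LieAlgebra R L'] [IsLieAbelian L']

def toLieEquivOfIsLieAbelian (e : L ≃ₗ[R] L') : L ≃ₗ⁅R⁆ L' :=
  { e with map_lie' := by simp [trivial_lie_zero] }

@[simp]
theorem toLieEquivOfIsLieAbelian_apply (e : L ≃ₗ[R] L') (x : L) :
    e.toLieEquivOfIsLieAbelian x = e x :=
  rfl

end LinearEquiv

section SpanSingletonDilation

variable {K M : Type*} [Field K] [AddCommGroup M] [Module K M]

theorem notMem_span_singleton_comm {v y : M} (hv : v ≠ 0) (hy : y ∉ K ∙ v) :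
    v ∉ K ∙ y := by
  intro hvy
  obtain ⟨a, rfl⟩ := mem_span_singleton.mp hvy
  have ha : a ≠ 0 := by rintro rfl; simp at hv
  exact hy (mem_span_singleton.mpr ⟨a⁻¹, inv_smul_smul₀ ha y⟩)

theorem exists_dual_apply_eq_one_of_notMem_span_singleton {v y : M} (hv : v ∉ K ∙ y) :
    ∃ f : Dual K M, f v = 1 ∧ f y = 0 := by
  obtain ⟨f, hfv, hfy⟩ := exists_dual_map_eq_bot_of_notMem hv inferInstance
  refine ⟨(f v)⁻¹ • f, inv_mul_cancel₀ hfv, ?_⟩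
  have : f y = 0 := by simpa [map_span, Set.image_singleton] using hfy
  simp [this]

theorem exists_linearEquiv_apply_eq_smul_of_notMem_span_singleton {v y : M} {c : K}
    (hc : c ≠ 0) (hv : v ∉ K ∙ y) : ∃ e : M ≃ₗ[K] M, e v = c • v ∧ e y = y := by
  obtain ⟨f, hfv, hfy⟩ := exists_dual_apply_eq_one_of_notMem_span_singleton hv
  have hunit : IsUnit (1 + f ((c - 1) • v)) := by simpa [hfv] using hc
  refine ⟨LinearEquiv.dilatransvection hunit, ?_, ?_⟩
  · rw [LinearEquiv.dilatransvection.apply, hfv, one_smul]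
    module
  · simp [LinearEquiv.dilatransvection.apply, hfy]

variable (K) in
open scoped Classical in
noncomputable def spanSingletonDilation (c : K) (v : M) (x : M) : M :=
  if x ∈ K ∙ v then c • x else x

theorem spanSingletonDilation_of_mem {c : K} {v x : M} (hx : x ∈ K ∙ v) :
    spanSingletonDilation K c v x = c • x := by
  simp [spanSingletonDilation, hx]

theorem spanSingletonDilation_of_notMem {c : K} {v x : M} (hx : x ∉ K ∙ v) :
    spanSingletonDilation K c v x = x := by
  simp [spanSingletonDilation, hx]

theorem exists_linearEquiv_eq_spanSingletonDilation_of_mem_of_notMem {c : K} {v x y : M}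
    (hc : c ≠ 0) (hv : v ≠ 0) (hx : x ∈ K ∙ v) (hy : y ∉ K ∙ v) :
    ∃ e : M ≃ₗ[K] M,
      e x = spanSingletonDilation K c v x ∧ e y = spanSingletonDilation K c v y := by
  obtain ⟨e, hev, hey⟩ := exists_linearEquiv_apply_eq_smul_of_notMem_span_singleton hc
    (notMem_span_singleton_comm hv hy)
  refine ⟨e, ?_, by rw [spanSingletonDilation_of_notMem hy, hey]⟩
  obtain ⟨a, rfl⟩ := mem_span_singleton.mp hx
  rw [spanSingletonDilation_of_mem hx, map_smul, hev, smul_comm]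

theorem exists_linearEquiv_eq_spanSingletonDilation {c : K} {v : M} (hc : c ≠ 0) (hv : v ≠ 0)
    (x y : M) :
    ∃ e : M ≃ₗ[K] M,
      e x = spanSingletonDilation K c v x ∧ e y = spanSingletonDilation K c v y := by
  by_cases hx : x ∈ K ∙ v <;> by_cases hy : y ∈ K ∙ v
  · exact ⟨LinearEquiv.smulOfNeZero K M c hc,
      (spanSingletonDilation_of_mem hx).symm, (spanSingletonDilation_of_mem hy).symm⟩
  · exact exists_linearEquiv_eq_spanSingletonDilation_of_mem_of_notMem hc hv hx hy
  · obtain ⟨e, hey, hex⟩ :=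
      exists_linearEquiv_eq_spanSingletonDilation_of_mem_of_notMem hc hv hy hx
    exact ⟨e, hex, hey⟩
  · exact ⟨LinearEquiv.refl K M, (spanSingletonDilation_of_notMem hx).symm,
      (spanSingletonDilation_of_notMem hy).symm⟩

theorem spanSingletonDilation_add_ne {c : K} {v w : M} (hc : c ≠ 1) (hv : v ≠ 0)
    (hw : w ∉ K ∙ v) :
    spanSingletonDilation K c v (v + w) ≠
      spanSingletonDilation K c v v + spanSingletonDilation K c v w := by
  have hvw : v + w ∉ K ∙ v := fun h ↦
    hw (by simpa using sub_mem h (mem_span_singleton_self v))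
  rw [spanSingletonDilation_of_notMem hvw, spanSingletonDilation_of_notMem hw,
    spanSingletonDilation_of_mem (mem_span_singleton_self v), ne_eq, add_left_inj]
  intro h
  exact hc (smul_left_injective K hv (by simpa using h.symm))

theorem exists_notMem_span_singleton_of_two_le_finrank (hM : 2 ≤ finrank K M) (v : M) :
    ∃ w, w ∉ K ∙ v := by
  by_contra! h
  have htop : K ∙ v = ⊤ := eq_top_iff.mpr fun w _ ↦ h w
  have := finrank_span_le_card (R := K) ({v} : Set M)
  rw [htop, finrank_top] at this
  simp at this
  omega

end SpanSingletonDilation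

theorem abelian_exists_two_local_automorphism_not_automorphism_general
    (F L : Type*) [Field F] [CharZero F]
    [LieRing L] [LieAlgebra F L]
    [IsLieAbelian L]
    (hdim : 2 ≤ Module.finrank F L) :
    ∃ T : L → L, Is2LocalAut F T ∧ ¬ ∃ Φ : L ≃ₗ⁅F⁆ L, ∀ x : L, Φ x = T x := by
  have : Nontrivial L := Module.nontrivial_of_finrank_pos (R := F) (by omega)
  obtain ⟨v, hv⟩ := exists_ne (0 : L)
  obtain ⟨w, hw⟩ := exists_notMem_span_singleton_of_two_le_finrank hdim v
  refine ⟨spanSingletonDilation F (2 : F) v, fun x y ↦ ?_, ?_⟩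
  · obtain ⟨e, hx, hy⟩ := exists_linearEquiv_eq_spanSingletonDilation (two_ne_zero' F) hv x y
    exact ⟨e.toLieEquivOfIsLieAbelian, hx, hy⟩
  · rintro ⟨Φ, hΦ⟩
    apply spanSingletonDilation_add_ne (OfNat.ofNat_ne_one 2 : (2 : F) ≠ 1) hv hw
    simp only [← hΦ, map_add]

/-- Every finite-dimensional abelian Lie algebra of dimension at least 2 over an
algebraically closed field of characteristic zero admits a 2-local automorphism which is not
an automorphism. -/
theorem abelian_exists_two_local_automorphism_not_automorphism
    (F L : Type*) [Field F] [IsAlgClosed F] [CharZero F]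
    [LieRing L] [LieAlgebra F L] [FiniteDimensional F L]
    [IsLieAbelian L]
    (hdim : 2 ≤ Module.finrank F L) :
    ∃ T : L → L, Is2LocalAut F T ∧ ¬ ∃ Φ : L ≃ₗ⁅F⁆ L, ∀ x : L, Φ x = T x :=
  abelian_exists_two_local_automorphism_not_automorphism_general F L hdim
end
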